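/- arXiv:math-ph/0407008 — 12 statements merged into one kernel-verified Lean document; each statement's English description precedes it below -/
import Mathlib

section
/- Let A : ℝ → ℝ be continuously differentiable, let IA : ℝ → ℝ be an antiderivative of A (IA′ = A), and let ε ∈ ℝ. Suppose u : ℝ² → ℝ is twice continuously differentiable and satisfies ∂_t u = ∂_x(A(u)∂_x u) + A(u)∂_x u at every point of ℝ². Then for all (t,x) ∈ ℝ²: ∂_t[(e^x + ε)·u(t,x)] + ∂_x[−(e^x + ε)·A(u(t,x))·∂_x u(t,x) − ε·IA(u(t,x))] = 0. (The pair F = (e^x+ε)u, G = −(e^x+ε)Au_x − ε∫A is a conserved vector of the diffusion–convection equation with B = A.) -/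
/-!
Write `Q = A(u) u_x` for the flux and `φ(x) = eˣ + ε` for the weight. Since `(IA ∘ u)_x = Q`,
the product rule gives `D_t(φ u) + D_x(−φ Q − ε IA(u)) = φ (u_t − Q_x − Q) + (φ − φ' − ε) Q`.
The first term vanishes by the equation and the second because `φ' = eˣ = φ − ε`.
-/

/-- Partial derivative with respect to the first (time) variable. -/
noncomputable def pT (f : ℝ → ℝ → ℝ) (t x : ℝ) : ℝ := deriv (fun s => f s x) t

/-- Partial derivative with respect to the second (space) variable. -/
noncomputable def pX (f : ℝ → ℝ → ℝ) (t x : ℝ) : ℝ := deriv (fun y => f t y) x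

open Real

lemma pT_const_mul (φ : ℝ → ℝ) (f : ℝ → ℝ → ℝ) (t x : ℝ) :
    pT (fun t x => φ x * f t x) t x = φ x * pT f t x :=
  deriv_const_mul_field _

lemma differentiable_comp_mul_deriv {A v : ℝ → ℝ} (hA : ContDiff ℝ 1 A) (hv : ContDiff ℝ 2 v) :
    Differentiable ℝ (fun y => A (v y) * deriv v y) := by
  obtain ⟨hv_diff, -, hv'⟩ := contDiff_succ_iff_deriv (n := 1).mp hv
  exact ((hA.differentiable one_ne_zero).comp hv_diff).mul (hv'.differentiable one_ne_zero)

lemma pX_weighted_flux_sub {A IA φ : ℝ → ℝ} {u : ℝ → ℝ → ℝ} {φ' c t x : ℝ}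
    (hφ : HasDerivAt φ φ' x) (hIA : HasDerivAt IA (A (u t x)) (u t x))
    (hu : DifferentiableAt ℝ (fun y => u t y) x)
    (hQ : DifferentiableAt ℝ (fun y => A (u t y) * pX u t y) x) :
    pX (fun t x => -(φ x * A (u t x) * pX u t x) - c * IA (u t x)) t x
      = -(φ' * (A (u t x) * pX u t x) + φ x * pX (fun t x => A (u t x) * pX u t x) t x)
          - c * (A (u t x) * pX u t x) := by
  have hIAu : HasDerivAt (fun y => IA (u t y)) (A (u t x) * pX u t x) x :=
    hIA.comp x hu.hasDerivAt
  have hG := ((hφ.mul hQ.hasDerivAt).neg).sub (hIAu.const_mul c)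
  simp only [mul_assoc] at hG ⊢
  exact hG.deriv

/-- The pair `F = (e^x + ε) u`, `G = −(e^x + ε) A(u) u_x − ε ∫A` is a conserved vector of
the diffusion–convection equation with `B = A`: `u_t = (A(u) u_x)_x + A(u) u_x`. -/
theorem conserved_vector_BeqA
    (A IA : ℝ → ℝ) (hA : ContDiff ℝ 1 A) (hIA : ∀ w : ℝ, HasDerivAt IA (A w) w)
    (ε : ℝ)
    (u : ℝ → ℝ → ℝ) (hu : ContDiff ℝ 2 (fun p : ℝ × ℝ => u p.1 p.2))
    (hpde : ∀ t x : ℝ,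
      pT u t x = pX (fun t x => A (u t x) * pX u t x) t x + A (u t x) * pX u t x) :
    ∀ t x : ℝ,
      pT (fun t x => (Real.exp x + ε) * u t x) t x
        + pX (fun t x =>
            -((Real.exp x + ε) * A (u t x) * pX u t x) - ε * IA (u t x)) t x = 0 := by
  intro t x
  have hslice : ContDiff ℝ 2 (fun y => u t y) := hu.comp (contDiff_const.prodMk contDiff_id)
  have hG := pX_weighted_flux_sub (c := ε) ((hasDerivAt_exp x).add_const ε) (hIA (u t x))
    ((hslice.differentiable two_ne_zero) x) (differentiable_comp_mul_deriv hA hslice x)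
  rw [pT_const_mul (fun x => exp x + ε), hG, hpde]
  ring
end

section
/- Let A, B : ℝ → ℝ be functions such that B does not belong to the real linear span of the constant function 1 and A (i.e. there are no constants c₀, c₁ with B(u) = c₀ + c₁A(u) for all u). Let F : ℝ² → ℝ be twice continuously differentiable and suppose that for every (t,x) ∈ ℝ² and every u ∈ ℝ: A(u)·∂_x²F(t,x) − B(u)·∂_x F(t,x) + ∂_t F(t,x) = 0. Then F is constant on ℝ². (This is the classifying condition argument showing that for B ∉ ⟨A,1⟩ every local conservation law of the diffusion–convection equation has density proportional to u.) -/
/-!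
At a fixed point `(t, x)` the classifying condition is a linear relation
`F_xx · A − F_x · B + F_t · 1 = 0` between the functions `A`, `B`, `1` of `u`. Since `B ∉ ⟨1, A⟩`,
its coefficient `F_x` must vanish. Then `F_xx = 0` as well, the condition reduces to `F_t = 0`,
and a differentiable function with both partial derivatives zero is constant.
-/

theorem coeff_eq_zero_of_notMem_span {A B : ℝ → ℝ}
    (hB : ¬ ∃ c0 c1 : ℝ, ∀ u : ℝ, B u = c0 + c1 * A u) {a b c : ℝ}
    (h : ∀ u : ℝ, A u * a - B u * b + c = 0) : b = 0 := by
  by_contra hb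
  refine hB ⟨c / b, a / b, fun u => ?_⟩
  field_simp
  linarith [h u]

theorem pX_pX_eq_zero {F : ℝ → ℝ → ℝ} (hx : ∀ t x, pX F t x = 0) (t x : ℝ) :
    pX (pX F) t x = 0 := by
  simp only [pX] at hx ⊢
  simp [hx]

theorem eq_of_pT_eq_zero_of_pX_eq_zero {F : ℝ → ℝ → ℝ}
    (hF : Differentiable ℝ (fun p : ℝ × ℝ => F p.1 p.2))
    (ht : ∀ t x, pT F t x = 0) (hx : ∀ t x, pX F t x = 0) (t x t' x' : ℝ) :
    F t x = F t' x' := by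
  have in_t : ∀ y, Differentiable ℝ (fun s => F s y) := fun y =>
    hF.comp (differentiable_id.prodMk (differentiable_const y))
  have in_x : ∀ s, Differentiable ℝ (fun y => F s y) := fun s =>
    hF.comp ((differentiable_const s).prodMk differentiable_id)
  calc F t x = F t' x := is_const_of_deriv_eq_zero (in_t x) (fun s => ht s x) t t'
    _ = F t' x' := is_const_of_deriv_eq_zero (in_x t') (hx t') x x'

/-- If `B ∉ ⟨1, A⟩` then every solution `F` of the classifying condition
`A(u) F_xx − B(u) F_x + F_t = 0` (for all values of `u`) is constant. -/
theorem classifying_condition_generic_case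
    (A B : ℝ → ℝ)
    (hB : ¬ ∃ c0 c1 : ℝ, ∀ u : ℝ, B u = c0 + c1 * A u)
    (F : ℝ → ℝ → ℝ) (hF : ContDiff ℝ 2 (fun p : ℝ × ℝ => F p.1 p.2))
    (hcl : ∀ t x u : ℝ, A u * pX (pX F) t x - B u * pX F t x + pT F t x = 0) :
    ∀ t x t' x' : ℝ, F t x = F t' x' := by
  have hx : ∀ t x, pX F t x = 0 := fun t x => coeff_eq_zero_of_notMem_span hB (hcl t x)
  have ht : ∀ t x, pT F t x = 0 := fun t x => by
    simpa [hx, pX_pX_eq_zero hx] using hcl t x 0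
  exact eq_of_pT_eq_zero_of_pX_eq_zero (hF.differentiable (by norm_num)) ht hx
end

section
/- Let A : ℝ → ℝ be a nonconstant function. Let F : ℝ² → ℝ be twice continuously differentiable and suppose that for every (t,x) ∈ ℝ² and every u ∈ ℝ: A(u)·∂_x²F(t,x) + ∂_t F(t,x) = 0. Then there exist constants c₀, c₁ ∈ ℝ such that F(t,x) = c₀ + c₁x for all (t,x) ∈ ℝ². (This is the classifying condition argument showing that for B = 0 and nonlinear A the space of local conservation laws of the diffusion equation is two-dimensional, with densities u and xu.) -/
theorem eq_zero_and_eq_zero_of_mul_add_eq_zero {R : Type*} [Ring R] [NoZeroDivisors R]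
    {a b p q : R} (hab : a ≠ b) (ha : a * p + q = 0) (hb : b * p + q = 0) : p = 0 ∧ q = 0 := by
  have hp : p = 0 := by
    have hsub : (a - b) * p = 0 := by
      rw [sub_mul, sub_eq_zero, ← add_right_cancel_iff (a := q), ha, hb]
    exact (mul_eq_zero.mp hsub).resolve_left (sub_ne_zero.mpr hab)
  exact ⟨hp, by simpa [hp] using ha⟩

theorem eq_add_mul_of_deriv_deriv_eq_zero {g : ℝ → ℝ} (hg : ContDiff ℝ 2 g)
    (h : ∀ x, deriv (deriv g) x = 0) (x : ℝ) : g x = g 0 + deriv g 0 * x := by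
  set c := deriv g 0
  have hg' : ∀ y, deriv g y = c := fun y =>
    is_const_of_deriv_eq_zero hg.differentiable_deriv_two h y 0
  have hd : ∀ y, HasDerivAt (fun y => g y - c * y) 0 y := fun y => by
    simpa [hg' y] using
      ((hg.differentiable two_ne_zero y).hasDerivAt).fun_sub ((hasDerivAt_id y).const_mul c)
  have := is_const_of_deriv_eq_zero (fun y => (hd y).differentiableAt) (fun y => (hd y).deriv) x 0
  simp only [mul_zero, sub_zero] at this
  linarith

section Slices

variable {n : WithTop ℕ∞} {F : ℝ → ℝ → ℝ}

theorem ContDiff.slice_fst (hF : ContDiff ℝ n (fun p : ℝ × ℝ => F p.1 p.2)) (x : ℝ) :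
    ContDiff ℝ n (fun s => F s x) :=
  hF.comp (contDiff_id.prodMk contDiff_const)

theorem ContDiff.slice_snd (hF : ContDiff ℝ n (fun p : ℝ × ℝ => F p.1 p.2)) (t : ℝ) :
    ContDiff ℝ n (fun y => F t y) :=
  hF.comp (contDiff_const.prodMk contDiff_id)

end Slices

theorem eq_of_pT_eq_zero {F : ℝ → ℝ → ℝ} (hF : ∀ x, Differentiable ℝ (fun s => F s x))
    (ht : ∀ t x, pT F t x = 0) (t x : ℝ) : F t x = F 0 x :=
  is_const_of_deriv_eq_zero (hF x) (fun s => ht s x) t 0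

/-- If `A` is nonconstant then every solution `F` of the classifying condition
`A(u) F_xx + F_t = 0` (for all values of `u`) is of the form `F = c₀ + c₁ x`. -/
theorem classifying_condition_B_zero
    (A : ℝ → ℝ) (hA : ∃ u1 u2 : ℝ, A u1 ≠ A u2)
    (F : ℝ → ℝ → ℝ) (hF : ContDiff ℝ 2 (fun p : ℝ × ℝ => F p.1 p.2))
    (hcl : ∀ t x u : ℝ, A u * pX (pX F) t x + pT F t x = 0) :
    ∃ c0 c1 : ℝ, ∀ t x : ℝ, F t x = c0 + c1 * x := by
  obtain ⟨u1, u2, hu⟩ := hA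
  have hvanish : ∀ t x, pX (pX F) t x = 0 ∧ pT F t x = 0 := fun t x =>
    eq_zero_and_eq_zero_of_mul_add_eq_zero hu (hcl t x u1) (hcl t x u2)
  have hindep : ∀ t x, F t x = F 0 x :=
    eq_of_pT_eq_zero (fun x => (hF.slice_fst x).differentiable two_ne_zero)
      (fun t x => (hvanish t x).2)
  refine ⟨F 0 0, pX F 0 0, fun t x => ?_⟩
  rw [hindep t x]
  exact eq_add_mul_of_deriv_deriv_eq_zero (hF.slice_snd 0) (fun y => (hvanish 0 y).1) x
end

section
/- Let A : ℝ → ℝ be continuously differentiable and let IA : ℝ → ℝ be an antiderivative of A (IA′ = A). Let u, v : ℝ² → ℝ be continuously differentiable functions satisfying the potential system ∂_x v = u and ∂_t v = A(u)·∂_x u + u·IA(u) at every point of ℝ² (this is the potential system of the diffusion–convection equation with B = ∫A + uA, since ∫B = u·∫A). Then for all (t,x) ∈ ℝ²: ∂_t[e^{v(t,x)}] + ∂_x[−e^{v(t,x)}·IA(u(t,x))] = 0. (Case 1.3: the pair F = e^v, G = −e^v∫A is a conserved vector of the potential system, yielding a potential conservation law of the equation with B = ∫A + uA.) -/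
lemma hasDerivAt_pT {f : ℝ → ℝ → ℝ} {t x : ℝ}
    (hf : DifferentiableAt ℝ (fun p : ℝ × ℝ => f p.1 p.2) (t, x)) :
    HasDerivAt (fun s => f s x) (pT f t x) t :=
  (hf.comp (f := fun s : ℝ => (s, x)) t (by fun_prop)).hasDerivAt

lemma hasDerivAt_pX {f : ℝ → ℝ → ℝ} {t x : ℝ}
    (hf : DifferentiableAt ℝ (fun p : ℝ × ℝ => f p.1 p.2) (t, x)) :
    HasDerivAt (fun y => f t y) (pX f t x) x :=
  (hf.comp (f := fun y : ℝ => (t, y)) x (by fun_prop)).hasDerivAt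

theorem conserved_vector_case_1_3_general
    (A IA : ℝ → ℝ) (hIA : ∀ w : ℝ, HasDerivAt IA (A w) w)
    (u v : ℝ → ℝ → ℝ)
    (hu : ContDiff ℝ 1 (fun p : ℝ × ℝ => u p.1 p.2))
    (hv : ContDiff ℝ 1 (fun p : ℝ × ℝ => v p.1 p.2))
    (hvx : ∀ t x : ℝ, pX v t x = u t x)
    (hvt : ∀ t x : ℝ, pT v t x = A (u t x) * pX u t x + u t x * IA (u t x)) :
    ∀ t x : ℝ,
      pT (fun t x => Real.exp (v t x)) t x
        + pX (fun t x => -(Real.exp (v t x) * IA (u t x))) t x = 0 := by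
  intro t x
  have hud := hu.differentiable one_ne_zero (t, x)
  have hvd := hv.differentiable one_ne_zero (t, x)
  have hF : HasDerivAt (fun s => Real.exp (v s x)) (Real.exp (v t x) * pT v t x) t :=
    (hasDerivAt_pT hvd).exp
  have hG : HasDerivAt (fun y => -(Real.exp (v t y) * IA (u t y)))
      (-(Real.exp (v t x) * pX v t x * IA (u t x)
        + Real.exp (v t x) * (A (u t x) * pX u t x))) x :=
    ((hasDerivAt_pX hvd).exp.mul ((hIA (u t x)).comp x (hasDerivAt_pX hud))).neg
  rw [pT, hF.deriv, pX, hG.deriv, hvt, hvx]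
  ring

/-- Case 1.3: the pair `F = e^v`, `G = −e^v ∫A` is a conserved vector of the potential
system `v_x = u`, `v_t = A(u) u_x + u ∫A` of the diffusion–convection equation with
`B = ∫A + u A`. -/
theorem conserved_vector_case_1_3
    (A IA : ℝ → ℝ) (hA : ContDiff ℝ 1 A) (hIA : ∀ w : ℝ, HasDerivAt IA (A w) w)
    (u v : ℝ → ℝ → ℝ)
    (hu : ContDiff ℝ 1 (fun p : ℝ × ℝ => u p.1 p.2))
    (hv : ContDiff ℝ 1 (fun p : ℝ × ℝ => v p.1 p.2))
    (hvx : ∀ t x : ℝ, pX v t x = u t x)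
    (hvt : ∀ t x : ℝ, pT v t x = A (u t x) * pX u t x + u t x * IA (u t x)) :
    ∀ t x : ℝ,
      pT (fun t x => Real.exp (v t x)) t x
        + pX (fun t x => -(Real.exp (v t x) * IA (u t x))) t x = 0 :=
  conserved_vector_case_1_3_general A IA hIA u v hu hv hvx hvt
end

section
/- Let σ : ℝ² → ℝ be a smooth function of two arguments (t, v) satisfying the backward linear heat equation in these arguments: ∂_t σ + ∂_v² σ = 0 everywhere. Let u, v : ℝ² → ℝ be continuously differentiable with u nowhere zero, satisfying the potential system ∂_x v = u and ∂_t v = u^{−2}·∂_x u at every point of ℝ² (the potential system of the diffusion equation u_t = (u^{−2}u_x)_x). Then for all (t,x) ∈ ℝ²: ∂_t[σ(t, v(t,x))] + ∂_x[∂_v σ(t, v(t,x)) / u(t,x)] = 0. (Case 1.4: the pair F = σ, G = σ_v u^{−1} is a conserved vector of the potential system of the u^{−2}-diffusion equation, giving an infinite series of potential conservation laws parameterized by solutions σ of the backward linear heat equation.) -/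
lemma clm_eval_pair (L : ℝ × ℝ →L[ℝ] ℝ) (a b : ℝ) :
    L (a, b) = a * L (1, 0) + b * L (0, 1) := by
  have h : (a, b) = a • ((1 : ℝ), (0 : ℝ)) + b • ((0 : ℝ), (1 : ℝ)) := by
    simp [Prod.ext_iff]
  rw [h, map_add, map_smul, map_smul, smul_eq_mul, smul_eq_mul]

/-- Case 1.4: the pair `F = σ(t,v)`, `G = σ_v(t,v)/u` is a conserved vector of the
potential system `v_x = u`, `v_t = u⁻² u_x` of the `u⁻²`-diffusion equation, for every
solution `σ` of the backward linear heat equation `σ_t + σ_vv = 0`. -/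
theorem conserved_vector_case_1_4
    (σ : ℝ → ℝ → ℝ) (hσ : ContDiff ℝ (⊤ : ℕ∞) (fun p : ℝ × ℝ => σ p.1 p.2))
    (hback : ∀ t w : ℝ, pT σ t w + pX (pX σ) t w = 0)
    (u v : ℝ → ℝ → ℝ)
    (hu : ContDiff ℝ 1 (fun p : ℝ × ℝ => u p.1 p.2))
    (hv : ContDiff ℝ 1 (fun p : ℝ × ℝ => v p.1 p.2))
    (hu0 : ∀ t x : ℝ, u t x ≠ 0)
    (hvx : ∀ t x : ℝ, pX v t x = u t x)
    (hvt : ∀ t x : ℝ, pT v t x = pX u t x / (u t x) ^ 2) :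
    ∀ t x : ℝ,
      pT (fun t x => σ t (v t x)) t x
        + pX (fun t x => pX σ t (v t x) / u t x) t x = 0 := by
  intro t x
  set f : ℝ × ℝ → ℝ := fun p => σ p.1 p.2 with hfdef
  have hfd : Differentiable ℝ f := hσ.differentiable (by simp)
  set τ : ℝ × ℝ → ℝ := fun q => fderiv ℝ f q (0, 1) with hτdef
  have hτc : ContDiff ℝ (⊤ : ℕ∞) τ := by
    exact (hσ.fderiv_right (by simp)).clm_apply contDiff_const
  have hτd : Differentiable ℝ τ := hτc.differentiable (by simp)
  -- partial derivatives of σ via fderiv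
  have hpXσ : ∀ a b : ℝ, pX σ a b = τ (a, b) := by
    intro a b
    have h : HasDerivAt (fun y => f (a, y)) (fderiv ℝ f (a, b) (0, 1)) b :=
      (hfd (a, b)).hasFDerivAt.comp_hasDerivAt b
        (HasDerivAt.prodMk (hasDerivAt_const b a) (hasDerivAt_id b))
    exact h.deriv
  have hpTσ : ∀ a b : ℝ, pT σ a b = fderiv ℝ f (a, b) (1, 0) := by
    intro a b
    have h : HasDerivAt (fun s => f (s, b)) (fderiv ℝ f (a, b) (1, 0)) a :=
      by have := (hfd (a, b)).hasFDerivAt.comp_hasDerivAt a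
                   (HasDerivAt.prodMk (hasDerivAt_id a) (hasDerivAt_const a b)); exact this
    exact h.deriv
  have hpXXσ : ∀ a b : ℝ, pX (pX σ) a b = fderiv ℝ τ (a, b) (0, 1) := by
    intro a b
    have heq : (fun y => pX σ a y) = fun y => τ (a, y) := by
      funext y; exact hpXσ a y
    have h : HasDerivAt (fun y => τ (a, y)) (fderiv ℝ τ (a, b) (0, 1)) b :=
      (hτd (a, b)).hasFDerivAt.comp_hasDerivAt b
        (HasDerivAt.prodMk (hasDerivAt_const b a) (hasDerivAt_id b))
    rw [pX, heq]
    exact h.deriv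
  -- derivatives of u, v curves
  have hud : Differentiable ℝ (fun p : ℝ × ℝ => u p.1 p.2) := hu.differentiable one_ne_zero
  have hvd : Differentiable ℝ (fun p : ℝ × ℝ => v p.1 p.2) := hv.differentiable one_ne_zero
  have hux : HasDerivAt (fun y => u t y) (pX u t x) x := by
    have h : DifferentiableAt ℝ (fun y => u t y) x :=
      (hud (t, x)).comp x (((differentiable_const t).prodMk differentiable_id) x)
    exact h.hasDerivAt
  have hvxh : HasDerivAt (fun y => v t y) (u t x) x := by
    have h : DifferentiableAt ℝ (fun y => v t y) x :=
      (hvd (t, x)).comp x (((differentiable_const t).prodMk differentiable_id) x)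
    have := h.hasDerivAt
    rwa [show deriv (fun y => v t y) x = u t x from hvx t x] at this
  have hvth : HasDerivAt (fun s => v s x) (pX u t x / (u t x) ^ 2) t := by
    have h : DifferentiableAt ℝ (fun s => v s x) t :=
      by have := (hvd (t, x)).comp t ((Differentiable.prodMk (differentiable_id (𝕜 := ℝ)) (differentiable_const x)) t); exact this
    have := h.hasDerivAt
    rwa [show deriv (fun s => v s x) t = pX u t x / (u t x) ^ 2 from hvt t x] at this
  -- compute pT of F
  have hF : pT (fun t x => σ t (v t x)) t x
      = fderiv ℝ f (t, v t x) (1, 0)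
        + (pX u t x / (u t x) ^ 2) * τ (t, v t x) := by
    have hcurve : HasDerivAt (fun s => ((s : ℝ), v s x))
        ((1 : ℝ), pX u t x / (u t x) ^ 2) t := HasDerivAt.prodMk (hasDerivAt_id t) hvth
    have h : HasDerivAt (fun s => f (s, v s x))
        (fderiv ℝ f (t, v t x) ((1 : ℝ), pX u t x / (u t x) ^ 2)) t :=
      by have := (hfd (t, v t x)).hasFDerivAt.comp_hasDerivAt t hcurve; exact this
    have := h.deriv
    rw [pT]
    rw [show (fun s => σ s (v s x)) = fun s => f (s, v s x) from rfl, this,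
      clm_eval_pair]
    ring
  -- compute pX of G
  have hG : pX (fun t x => pX σ t (v t x) / u t x) t x
      = (u t x * fderiv ℝ τ (t, v t x) (0, 1) * u t x
          - τ (t, v t x) * pX u t x) / (u t x) ^ 2 := by
    have heq : (fun y => pX σ t (v t y) / u t y) = fun y => τ (t, v t y) / u t y := by
      funext y; rw [hpXσ]
    have hcurve : HasDerivAt (fun y => ((t : ℝ), v t y)) ((0 : ℝ), u t x) x :=
      HasDerivAt.prodMk (hasDerivAt_const x t) hvxh
    have hnum : HasDerivAt (fun y => τ (t, v t y))
        (u t x * fderiv ℝ τ (t, v t x) (0, 1)) x := by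
      have h : HasDerivAt (fun y => τ (t, v t y))
          (fderiv ℝ τ (t, v t x) ((0 : ℝ), u t x)) x :=
        by have := (hτd (t, v t x)).hasFDerivAt.comp_hasDerivAt x hcurve; exact this
      rwa [clm_eval_pair, zero_mul, zero_add] at h
    have hdiv := hnum.fun_div hux (hu0 t x)
    rw [pX, heq]
    rw [hdiv.deriv]
  rw [hF, hG]
  have hb := hback t (v t x)
  rw [hpTσ, hpXXσ] at hb
  have h0 := hu0 t x
  field_simp
  nlinarith [hb, sq_nonneg (u t x), mul_self_nonneg (u t x)]
end

section
/- Let α : ℝ² → ℝ be twice continuously differentiable with ∂_t α + ∂_x² α = 0 at every point of ℝ² (the backward linear heat equation). Let u, v : ℝ² → ℝ be continuously differentiable functions satisfying the potential system ∂_x v = u and ∂_t v = ∂_x u + u² at every point of ℝ² (the potential system of the Burgers equation u_t = u_xx + 2uu_x). Then for all (t,x) ∈ ℝ²: ∂_t[α(t,x)·e^{v(t,x)}] + ∂_x[∂_x α(t,x)·e^{v(t,x)} − α(t,x)·u(t,x)·e^{v(t,x)}] = 0. (Case 1.6: the pair F = αe^v, G = α_x e^v − αue^v is a conserved vector of the potential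 system of the Burgers equation, giving an infinite series of potential conservation laws.) -/
/-!
Expanding both derivatives by the product and chain rules gives the characteristic form
`F_t + G_x = e^v ((α_t + α_xx) + α (v_t - u_x - u v_x) + α_x (v_x - u))`,
in which every bracket vanishes on solutions of the two systems.
-/

section Slices

variable {f : ℝ → ℝ → ℝ} {n : WithTop ℕ∞}

lemma ContDiff.differentiable_sliceT (hf : ContDiff ℝ n (fun p : ℝ × ℝ => f p.1 p.2))
    (hn : n ≠ 0) (x : ℝ) : Differentiable ℝ (fun s => f s x) :=
  (hf.comp (contDiff_id.prodMk contDiff_const)).differentiable hn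

lemma ContDiff.differentiable_sliceX (hf : ContDiff ℝ n (fun p : ℝ × ℝ => f p.1 p.2))
    (hn : n ≠ 0) (t : ℝ) : Differentiable ℝ (fun y => f t y) :=
  (hf.comp (contDiff_const.prodMk contDiff_id)).differentiable hn

lemma ContDiff.differentiable_sliceX_pX (hf : ContDiff ℝ 2 (fun p : ℝ × ℝ => f p.1 p.2))
    (t : ℝ) : Differentiable ℝ (fun y => pX f t y) :=
  (hf.comp (contDiff_const.prodMk contDiff_id)).differentiable_deriv_two

end Slices

theorem pT_add_pX_eq_characteristic_form {α u v : ℝ → ℝ → ℝ} {t x : ℝ}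
    (hαt : DifferentiableAt ℝ (fun s => α s x) t) (hvt : DifferentiableAt ℝ (fun s => v s x) t)
    (hαx : DifferentiableAt ℝ (fun y => α t y) x)
    (hαxx : DifferentiableAt ℝ (fun y => pX α t y) x)
    (hux : DifferentiableAt ℝ (fun y => u t y) x) (hvx : DifferentiableAt ℝ (fun y => v t y) x) :
    pT (fun t x => α t x * Real.exp (v t x)) t x
        + pX (fun t x => pX α t x * Real.exp (v t x) - α t x * u t x * Real.exp (v t x)) t x
      = Real.exp (v t x) * ((pT α t x + pX (pX α) t x)
          + α t x * (pT v t x - pX u t x - u t x * pX v t x) + pX α t x * (pX v t x - u t x)) := by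
  have hF : pT (fun t x => α t x * Real.exp (v t x)) t x
      = pT α t x * Real.exp (v t x) + α t x * (Real.exp (v t x) * pT v t x) :=
    (hαt.hasDerivAt.mul hvt.hasDerivAt.exp).deriv
  have hG : pX (fun t x => pX α t x * Real.exp (v t x) - α t x * u t x * Real.exp (v t x)) t x
      = (pX (pX α) t x * Real.exp (v t x) + pX α t x * (Real.exp (v t x) * pX v t x))
        - ((pX α t x * u t x + α t x * pX u t x) * Real.exp (v t x)
            + α t x * u t x * (Real.exp (v t x) * pX v t x)) :=
    ((hαxx.hasDerivAt.mul hvx.hasDerivAt.exp).sub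
      ((hαx.hasDerivAt.mul hux.hasDerivAt).mul hvx.hasDerivAt.exp)).deriv
  rw [hF, hG]
  ring

/-- Case 1.6: the pair `F = α e^v`, `G = α_x e^v − α u e^v` is a conserved vector of the
potential system `v_x = u`, `v_t = u_x + u²` of the Burgers equation, for every solution
`α` of the backward linear heat equation `α_t + α_xx = 0`. -/
theorem conserved_vector_case_1_6
    (α : ℝ → ℝ → ℝ) (hα : ContDiff ℝ 2 (fun p : ℝ × ℝ => α p.1 p.2))
    (hback : ∀ t x : ℝ, pT α t x + pX (pX α) t x = 0)
    (u v : ℝ → ℝ → ℝ)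
    (hu : ContDiff ℝ 1 (fun p : ℝ × ℝ => u p.1 p.2))
    (hv : ContDiff ℝ 1 (fun p : ℝ × ℝ => v p.1 p.2))
    (hvx : ∀ t x : ℝ, pX v t x = u t x)
    (hvt : ∀ t x : ℝ, pT v t x = pX u t x + (u t x) ^ 2) :
    ∀ t x : ℝ,
      pT (fun t x => α t x * Real.exp (v t x)) t x
        + pX (fun t x =>
            pX α t x * Real.exp (v t x) - α t x * u t x * Real.exp (v t x)) t x = 0 := by
  intro t x
  rw [pT_add_pX_eq_characteristic_form (hα.differentiable_sliceT two_ne_zero x t)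
    (hv.differentiable_sliceT one_ne_zero x t) (hα.differentiable_sliceX two_ne_zero t x)
    (hα.differentiable_sliceX_pX t x) (hu.differentiable_sliceX one_ne_zero t x)
    (hv.differentiable_sliceX one_ne_zero t x), hback, hvx, hvt]
  ring
end

section
/- Let α, β : ℝ² → ℝ be smooth functions satisfying the backward linear heat equation ∂_t α + ∂_x² α = 0 and ∂_t β + ∂_x² β = 0 on ℝ², with α nowhere zero. Let u, v : ℝ² → ℝ be continuously differentiable functions satisfying the potential system ∂_x v = α·u and ∂_t v = α·∂_x u − ∂_x α·u at every point of ℝ². Then for all (t,x) ∈ ℝ²: ∂_t[∂_x(β/α)(t,x)·v(t,x)] + ∂_x[−α(t,x)·∂_x(β/α)(t,x)·u(t,x) − ∂_t(β/α)(t,x)·v(t,x)] = 0. (Case 4.1: the pair F = (β/α)_x v, G = −α(β/α)_x u − (β/α)_t v is a conserved vector of the potential system of the linear heat equation associated with α.) -/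
/-- Directional derivative in the time direction for an uncurried function. -/
noncomputable def DT (f : ℝ × ℝ → ℝ) (p : ℝ × ℝ) : ℝ := fderiv ℝ f p (1, 0)

/-- Directional derivative in the space direction for an uncurried function. -/
noncomputable def DX (f : ℝ × ℝ → ℝ) (p : ℝ × ℝ) : ℝ := fderiv ℝ f p (0, 1)

lemma sliceT (f : ℝ × ℝ → ℝ) {t x : ℝ} (hf : DifferentiableAt ℝ f (t, x)) :
    HasDerivAt (fun s => f (s, x)) (DT f (t, x)) t :=
  hf.hasFDerivAt.comp_hasDerivAt t ((hasDerivAt_id t).prodMk (hasDerivAt_const t x))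

lemma sliceX (f : ℝ × ℝ → ℝ) {t x : ℝ} (hf : DifferentiableAt ℝ f (t, x)) :
    HasDerivAt (fun y => f (t, y)) (DX f (t, x)) x :=
  hf.hasFDerivAt.comp_hasDerivAt x ((hasDerivAt_const x t).prodMk (hasDerivAt_id x))

lemma second_apply (f : ℝ × ℝ → ℝ) (w : ℝ × ℝ) {p : ℝ × ℝ}
    (hf : DifferentiableAt ℝ (fderiv ℝ f) p) (v : ℝ × ℝ) :
    fderiv ℝ (fun q => fderiv ℝ f q w) p v = fderiv ℝ (fderiv ℝ f) p v w := by
  rw [fderiv_clm_apply hf (differentiableAt_const w)]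
  simp

lemma contDiff_DX {f : ℝ × ℝ → ℝ} (hf : ContDiff ℝ (⊤ : ℕ∞) f) : ContDiff ℝ (⊤ : ℕ∞) (DX f) :=
  (hf.fderiv_right (by simp)).clm_apply contDiff_const

lemma contDiff_DT {f : ℝ × ℝ → ℝ} (hf : ContDiff ℝ (⊤ : ℕ∞) f) : ContDiff ℝ (⊤ : ℕ∞) (DT f) :=
  (hf.fderiv_right (by simp)).clm_apply contDiff_const

lemma clairaut (f : ℝ × ℝ → ℝ) (hf : ContDiff ℝ (⊤ : ℕ∞) f) (p : ℝ × ℝ) :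
    DT (DX f) p = DX (DT f) p := by
  have hd : DifferentiableAt ℝ (fderiv ℝ f) p :=
    ((hf.fderiv_right (m := (⊤ : ℕ∞)) (by simp)).differentiable (by simp)) p
  have h1 : DT (DX f) p = fderiv ℝ (fderiv ℝ f) p (1, 0) (0, 1) :=
    second_apply f (0, 1) hd (1, 0)
  have h2 : DX (DT f) p = fderiv ℝ (fderiv ℝ f) p (0, 1) (1, 0) :=
    second_apply f (1, 0) hd (0, 1)
  rw [h1, h2]
  exact (hf.contDiffAt.isSymmSndFDerivAt (by rw [minSmoothness_of_isRCLikeNormedField]; exact WithTop.coe_le_coe.mpr (le_top : (2 : ℕ∞) ≤ ⊤))) _ _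

lemma DX_mul {f g : ℝ × ℝ → ℝ} {p : ℝ × ℝ}
    (hf : DifferentiableAt ℝ f p) (hg : DifferentiableAt ℝ g p) :
    DX (fun q => f q * g q) p = f p * DX g p + g p * DX f p := by
  unfold DX
  rw [fderiv_fun_mul hf hg]
  simp [smul_eq_mul]

lemma DT_mul {f g : ℝ × ℝ → ℝ} {p : ℝ × ℝ}
    (hf : DifferentiableAt ℝ f p) (hg : DifferentiableAt ℝ g p) :
    DT (fun q => f q * g q) p = f p * DT g p + g p * DT f p := by
  unfold DT
  rw [fderiv_fun_mul hf hg]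
  simp [smul_eq_mul]

lemma DX_add {f g : ℝ × ℝ → ℝ} {p : ℝ × ℝ}
    (hf : DifferentiableAt ℝ f p) (hg : DifferentiableAt ℝ g p) :
    DX (fun q => f q + g q) p = DX f p + DX g p := by
  unfold DX
  rw [fderiv_fun_add hf hg]
  simp

/-- Case 4.1: the pair `F = (β/α)_x v`, `G = −α (β/α)_x u − (β/α)_t v` is a conserved
vector of the potential system `v_x = α u`, `v_t = α u_x − α_x u` of the linear heat
equation associated with `α`. -/
theorem conserved_vector_case_4_1
    (α β : ℝ → ℝ → ℝ)
    (hα : ContDiff ℝ (⊤ : ℕ∞) (fun p : ℝ × ℝ => α p.1 p.2))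
    (hβ : ContDiff ℝ (⊤ : ℕ∞) (fun p : ℝ × ℝ => β p.1 p.2))
    (hbackα : ∀ t x : ℝ, pT α t x + pX (pX α) t x = 0)
    (hbackβ : ∀ t x : ℝ, pT β t x + pX (pX β) t x = 0)
    (hα0 : ∀ t x : ℝ, α t x ≠ 0)
    (u v : ℝ → ℝ → ℝ)
    (hu : ContDiff ℝ 1 (fun p : ℝ × ℝ => u p.1 p.2))
    (hv : ContDiff ℝ 1 (fun p : ℝ × ℝ => v p.1 p.2))
    (hvx : ∀ t x : ℝ, pX v t x = α t x * u t x)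
    (hvt : ∀ t x : ℝ, pT v t x = α t x * pX u t x - pX α t x * u t x) :
    ∀ t x : ℝ,
      pT (fun t x => pX (fun t x => β t x / α t x) t x * v t x) t x
        + pX (fun t x =>
            -(α t x * pX (fun t x => β t x / α t x) t x * u t x)
              - pT (fun t x => β t x / α t x) t x * v t x) t x = 0 := by
  intro t x
  let A : ℝ × ℝ → ℝ := fun p => α p.1 p.2
  let B : ℝ × ℝ → ℝ := fun p => β p.1 p.2
  let U : ℝ × ℝ → ℝ := fun p => u p.1 p.2
  let V : ℝ × ℝ → ℝ := fun p => v p.1 p.2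
  let Γ : ℝ × ℝ → ℝ := fun p => β p.1 p.2 / α p.1 p.2
  have hΓ : ContDiff ℝ (⊤ : ℕ∞) Γ := hβ.div hα (fun p => hα0 p.1 p.2)
  have hAd : Differentiable ℝ A := hα.differentiable (by simp)
  have hBd : Differentiable ℝ B := hβ.differentiable (by simp)
  have hΓd : Differentiable ℝ Γ := hΓ.differentiable (by simp)
  have hUd : Differentiable ℝ U := hu.differentiable (by simp)
  have hVd : Differentiable ℝ V := hv.differentiable (by simp)
  have hΓxd : Differentiable ℝ (DX Γ) := (contDiff_DX hΓ).differentiable (by simp)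
  have hΓtd : Differentiable ℝ (DT Γ) := (contDiff_DT hΓ).differentiable (by simp)
  have hAxd : Differentiable ℝ (DX A) := (contDiff_DX hα).differentiable (by simp)
  have hBxd : Differentiable ℝ (DX B) := (contDiff_DX hβ).differentiable (by simp)
  -- replace the inner pX/pT by DX/DT
  have eF : (fun t x => pX (fun t x => β t x / α t x) t x * v t x)
      = (fun s y => DX Γ (s, y) * v s y) := by
    funext s y
    exact congrArg (· * v s y) ((sliceX Γ (hΓd (s, y))).deriv)
  have eG : (fun t x =>
        -(α t x * pX (fun t x => β t x / α t x) t x * u t x)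
          - pT (fun t x => β t x / α t x) t x * v t x)
      = (fun s y => -(α s y * DX Γ (s, y) * u s y) - DT Γ (s, y) * v s y) := by
    funext s y
    have h1 : pX (fun t x => β t x / α t x) s y = DX Γ (s, y) :=
      (sliceX Γ (hΓd (s, y))).deriv
    have h2 : pT (fun t x => β t x / α t x) s y = DT Γ (s, y) :=
      (sliceT Γ (hΓd (s, y))).deriv
    rw [h1, h2]
  rw [eF, eG]
  -- compute the two outer derivatives
  have hF : HasDerivAt (fun s => DX Γ (s, x) * v s x)
      (DT (DX Γ) (t, x) * v t x + DX Γ (t, x) * DT V (t, x)) t :=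
    (sliceT (DX Γ) (hΓxd (t, x))).mul (sliceT V (hVd (t, x)))
  have h1 : HasDerivAt (fun y => α t y * DX Γ (t, y))
      (DX A (t, x) * DX Γ (t, x) + α t x * DX (DX Γ) (t, x)) x :=
    (sliceX A (hAd (t, x))).mul (sliceX (DX Γ) (hΓxd (t, x)))
  have h2 : HasDerivAt (fun y => α t y * DX Γ (t, y) * u t y)
      ((DX A (t, x) * DX Γ (t, x) + α t x * DX (DX Γ) (t, x)) * u t x
        + α t x * DX Γ (t, x) * DX U (t, x)) x :=
    h1.mul (sliceX U (hUd (t, x)))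
  have h3 : HasDerivAt (fun y => DT Γ (t, y) * v t y)
      (DX (DT Γ) (t, x) * v t x + DT Γ (t, x) * DX V (t, x)) x :=
    (sliceX (DT Γ) (hΓtd (t, x))).mul (sliceX V (hVd (t, x)))
  have hG : HasDerivAt (fun y => -(α t y * DX Γ (t, y) * u t y) - DT Γ (t, y) * v t y)
      (-((DX A (t, x) * DX Γ (t, x) + α t x * DX (DX Γ) (t, x)) * u t x
          + α t x * DX Γ (t, x) * DX U (t, x))
        - (DX (DT Γ) (t, x) * v t x + DT Γ (t, x) * DX V (t, x))) x :=
    h2.neg.sub h3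
  have hFd : pT (fun s y => DX Γ (s, y) * v s y) t x
      = DT (DX Γ) (t, x) * v t x + DX Γ (t, x) * DT V (t, x) := hF.deriv
  have hGd : pX (fun s y => -(α s y * DX Γ (s, y) * u s y) - DT Γ (s, y) * v s y) t x
      = -((DX A (t, x) * DX Γ (t, x) + α t x * DX (DX Γ) (t, x)) * u t x
          + α t x * DX Γ (t, x) * DX U (t, x))
        - (DX (DT Γ) (t, x) * v t x + DT Γ (t, x) * DX V (t, x)) := hG.deriv
  rw [hFd, hGd]
  -- translate the potential system
  have pv_t : pT v t x = DT V (t, x) := (sliceT V (hVd (t, x))).deriv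
  have pv_x : pX v t x = DX V (t, x) := (sliceX V (hVd (t, x))).deriv
  have pu_x : pX u t x = DX U (t, x) := (sliceX U (hUd (t, x))).deriv
  have pa_x : pX α t x = DX A (t, x) := (sliceX A (hAd (t, x))).deriv
  have f1 : DT V (t, x) = α t x * DX U (t, x) - DX A (t, x) * u t x := by
    rw [← pv_t, ← pu_x, ← pa_x]; exact hvt t x
  have f2 : DX V (t, x) = α t x * u t x := by
    rw [← pv_x]; exact hvx t x
  have f3 : DT (DX Γ) (t, x) = DX (DT Γ) (t, x) := clairaut Γ hΓ (t, x)
  -- translate the backward heat equations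
  have eAx : pX α = fun s y => DX A (s, y) :=
    funext₂ fun s y => (sliceX A (hAd (s, y))).deriv
  have eBx : pX β = fun s y => DX B (s, y) :=
    funext₂ fun s y => (sliceX B (hBd (s, y))).deriv
  have hbα' : DT A (t, x) + DX (DX A) (t, x) = 0 := by
    have h := hbackα t x
    rw [eAx] at h
    rw [← (sliceT A (hAd (t, x))).deriv, ← (sliceX (DX A) (hAxd (t, x))).deriv]
    exact h
  have hbβ' : DT B (t, x) + DX (DX B) (t, x) = 0 := by
    have h := hbackβ t x
    rw [eBx] at h
    rw [← (sliceT B (hBd (t, x))).deriv, ← (sliceX (DX B) (hBxd (t, x))).deriv]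
    exact h
  -- product relations between B, A and Γ
  have eB : B = fun q => A q * Γ q := by
    funext p
    show β p.1 p.2 = α p.1 p.2 * (β p.1 p.2 / α p.1 p.2)
    rw [mul_comm, div_mul_cancel₀ _ (hα0 p.1 p.2)]
  have hBxp : ∀ p : ℝ × ℝ, DX B p = A p * DX Γ p + Γ p * DX A p := by
    intro p
    rw [eB]
    exact DX_mul (hAd p) (hΓd p)
  have hBt : DT B (t, x) = A (t, x) * DT Γ (t, x) + Γ (t, x) * DT A (t, x) := by
    rw [eB]
    exact DT_mul (hAd (t, x)) (hΓd (t, x))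
  have eBx2 : DX B = fun q => A q * DX Γ q + Γ q * DX A q := funext hBxp
  have hBxx : DX (DX B) (t, x)
      = (A (t, x) * DX (DX Γ) (t, x) + DX Γ (t, x) * DX A (t, x))
        + (Γ (t, x) * DX (DX A) (t, x) + DX A (t, x) * DX Γ (t, x)) := by
    rw [eBx2]
    rw [DX_add (f := fun q => A q * DX Γ q) (g := fun q => Γ q * DX A q) ((hAd (t, x)).mul (hΓxd (t, x))) ((hΓd (t, x)).mul (hAxd (t, x)))]
    rw [DX_mul (hAd (t, x)) (hΓxd (t, x)), DX_mul (hΓd (t, x)) (hAxd (t, x))]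
  have key : α t x * DT Γ (t, x) + 2 * DX A (t, x) * DX Γ (t, x)
      + α t x * DX (DX Γ) (t, x) = 0 := by
    have h := hbβ'
    rw [hBt, hBxx] at h
    have hA' : A (t, x) = α t x := rfl
    rw [hA'] at h
    linear_combination h - Γ (t, x) * hbα'
  rw [f1, f2, f3]
  linear_combination (-(u t x)) * key
end

section
/- Let A : ℝ → ℝ be continuously differentiable with antiderivative IA (IA′ = A). Let u, v¹, v² : ℝ² → ℝ be continuously differentiable functions satisfying simultaneously ∂_x v¹ = u, ∂_t v¹ = A(u)·∂_x u, ∂_x v² = x·u, and ∂_t v² = x·A(u)·∂_x u − IA(u) at every point of ℝ². Then the function w := x·v¹ − v² satisfies ∂_x w = v¹ and ∂_t w = IA(u) at every point of ℝ². (Consequently the second-level potential system v¹_x = u, w_x = v¹, w_t = ∫A obtained from the simplest potential conservation law with density v¹ is locally equivalent to the united first-level potential system constructed with the pair of independent local conservation laws, and that potential conservation law is trivial on the manifold of the united system.) -/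
section PartialDerivatives

variable {f g : ℝ → ℝ → ℝ}

lemma differentiableAt_slice_fst (hf : Differentiable ℝ (fun p : ℝ × ℝ => f p.1 p.2))
    (t x : ℝ) : DifferentiableAt ℝ (fun s => f s x) t :=
  (hf (t, x)).comp (f := fun s => (s, x)) t (differentiableAt_id.prodMk (differentiableAt_const x))

lemma differentiableAt_slice_snd (hf : Differentiable ℝ (fun p : ℝ × ℝ => f p.1 p.2))
    (t x : ℝ) : DifferentiableAt ℝ (fun y => f t y) x :=
  (hf (t, x)).comp (f := fun y => (t, y)) x ((differentiableAt_const t).prodMk differentiableAt_id)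

lemma pX_id_mul_sub {t x : ℝ} (hf : DifferentiableAt ℝ (fun y => f t y) x)
    (hg : DifferentiableAt ℝ (fun y => g t y) x) :
    pX (fun t x => x * f t x - g t x) t x = f t x + x * pX f t x - pX g t x := by
  have h : HasDerivAt (fun y => y * f t y - g t y) (1 * f t x + x * pX f t x - pX g t x) x :=
    ((hasDerivAt_id' x).mul hf.hasDerivAt).sub hg.hasDerivAt
  rw [pX, h.deriv, one_mul]

lemma pT_const_mul_sub {t x : ℝ} (hf : DifferentiableAt ℝ (fun s => f s x) t)
    (hg : DifferentiableAt ℝ (fun s => g s x) t) :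
    pT (fun t x => x * f t x - g t x) t x = x * pT f t x - pT g t x :=
  ((hf.hasDerivAt.const_mul x).sub hg.hasDerivAt).deriv

end PartialDerivatives

theorem second_level_potential_diffusion_general
    (A IA : ℝ → ℝ)
    (u v1 v2 : ℝ → ℝ → ℝ)
    (hv1 : ContDiff ℝ 1 (fun p : ℝ × ℝ => v1 p.1 p.2))
    (hv2 : ContDiff ℝ 1 (fun p : ℝ × ℝ => v2 p.1 p.2))
    (hv1x : ∀ t x : ℝ, pX v1 t x = u t x)
    (hv1t : ∀ t x : ℝ, pT v1 t x = A (u t x) * pX u t x)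
    (hv2x : ∀ t x : ℝ, pX v2 t x = x * u t x)
    (hv2t : ∀ t x : ℝ, pT v2 t x = x * A (u t x) * pX u t x - IA (u t x)) :
    ∀ t x : ℝ,
      pX (fun t x => x * v1 t x - v2 t x) t x = v1 t x ∧
      pT (fun t x => x * v1 t x - v2 t x) t x = IA (u t x) := by
  have hv1_diff := hv1.differentiable one_ne_zero
  have hv2_diff := hv2.differentiable one_ne_zero
  intro t x
  constructor
  · rw [pX_id_mul_sub (differentiableAt_slice_snd hv1_diff t x) (differentiableAt_slice_snd hv2_diff t x),
      hv1x, hv2x]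
    ring
  · rw [pT_const_mul_sub (differentiableAt_slice_fst hv1_diff t x) (differentiableAt_slice_fst hv2_diff t x),
      hv1t, hv2t]
    ring

/-- For the diffusion equation `u_t = (A(u)u_x)_x`, the second-level potential
`w = x v¹ − v²` built from the united first-level potential system satisfies
`w_x = v¹`, `w_t = ∫A`. -/
theorem second_level_potential_diffusion
    (A IA : ℝ → ℝ) (hA : ContDiff ℝ 1 A) (hIA : ∀ w : ℝ, HasDerivAt IA (A w) w)
    (u v1 v2 : ℝ → ℝ → ℝ)
    (hu : ContDiff ℝ 1 (fun p : ℝ × ℝ => u p.1 p.2))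
    (hv1 : ContDiff ℝ 1 (fun p : ℝ × ℝ => v1 p.1 p.2))
    (hv2 : ContDiff ℝ 1 (fun p : ℝ × ℝ => v2 p.1 p.2))
    (hv1x : ∀ t x : ℝ, pX v1 t x = u t x)
    (hv1t : ∀ t x : ℝ, pT v1 t x = A (u t x) * pX u t x)
    (hv2x : ∀ t x : ℝ, pX v2 t x = x * u t x)
    (hv2t : ∀ t x : ℝ, pT v2 t x = x * A (u t x) * pX u t x - IA (u t x)) :
    ∀ t x : ℝ,
      pX (fun t x => x * v1 t x - v2 t x) t x = v1 t x ∧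
      pT (fun t x => x * v1 t x - v2 t x) t x = IA (u t x) :=
  second_level_potential_diffusion_general A IA u v1 v2 hv1 hv2 hv1x hv1t hv2x hv2t
end

section
/- Let α, β : ℝ² → ℝ be smooth functions satisfying the backward linear heat equation ∂_t α + ∂_x² α = 0 and ∂_t β + ∂_x² β = 0 on ℝ², with α nowhere zero. Let u, v^α, v^β : ℝ² → ℝ be continuously differentiable functions satisfying simultaneously ∂_x v^α = α·u, ∂_t v^α = α·∂_x u − ∂_x α·u, ∂_x v^β = β·u, and ∂_t v^β = β·∂_x u − ∂_x β·u at every point of ℝ². Then the function w := (β/α)·v^α − v^β satisfies ∂_x w = ∂_x(β/α)·v^α and ∂_t w = α·∂_x(β/α)·u + ∂_t(β/α)·v^α at every point of ℝ². (Consequently for the linear heat equation the second-level potential system built from the simplest potential conservation law with conserved vector ((β/α)_x v^α, −α(β/α)_x u − (β/α)_t v^α) is locally equivalent to the united first-level potential system, and that conservation law is trivial on the manifold of the united system.) -/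
private lemma diffX {f : ℝ → ℝ → ℝ} (hf : ContDiff ℝ 1 (fun p : ℝ × ℝ => f p.1 p.2))
    (t x : ℝ) : DifferentiableAt ℝ (fun y => f t y) x :=
  (hf.differentiable one_ne_zero (t, x)).comp x
    ((differentiableAt_const t).prodMk differentiableAt_id)

private lemma diffT {f : ℝ → ℝ → ℝ} (hf : ContDiff ℝ 1 (fun p : ℝ × ℝ => f p.1 p.2))
    (t x : ℝ) : DifferentiableAt ℝ (fun s => f s x) t :=
  by have h := (hf.differentiable one_ne_zero (t, x)).comp t
      (differentiableAt_fun_id.prodMk (differentiableAt_const x) : DifferentiableAt ℝ (fun s : ℝ => (s, x)) t); exact h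

/-- For the linear heat equation, the second-level potential `w = (β/α) v^α − v^β`
built from the united first-level potential system satisfies
`w_x = (β/α)_x v^α` and `w_t = α (β/α)_x u + (β/α)_t v^α`. -/
theorem second_level_potential_linear_heat
    (α β : ℝ → ℝ → ℝ)
    (hα : ContDiff ℝ (⊤ : ℕ∞) (fun p : ℝ × ℝ => α p.1 p.2))
    (hβ : ContDiff ℝ (⊤ : ℕ∞) (fun p : ℝ × ℝ => β p.1 p.2))
    (hbackα : ∀ t x : ℝ, pT α t x + pX (pX α) t x = 0)
    (hbackβ : ∀ t x : ℝ, pT β t x + pX (pX β) t x = 0)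
    (hα0 : ∀ t x : ℝ, α t x ≠ 0)
    (u va vb : ℝ → ℝ → ℝ)
    (hu : ContDiff ℝ 1 (fun p : ℝ × ℝ => u p.1 p.2))
    (hva : ContDiff ℝ 1 (fun p : ℝ × ℝ => va p.1 p.2))
    (hvb : ContDiff ℝ 1 (fun p : ℝ × ℝ => vb p.1 p.2))
    (hvax : ∀ t x : ℝ, pX va t x = α t x * u t x)
    (hvat : ∀ t x : ℝ, pT va t x = α t x * pX u t x - pX α t x * u t x)
    (hvbx : ∀ t x : ℝ, pX vb t x = β t x * u t x)
    (hvbt : ∀ t x : ℝ, pT vb t x = β t x * pX u t x - pX β t x * u t x) :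
    ∀ t x : ℝ,
      pX (fun t x => (β t x / α t x) * va t x - vb t x) t x
          = pX (fun t x => β t x / α t x) t x * va t x ∧
      pT (fun t x => (β t x / α t x) * va t x - vb t x) t x
          = α t x * pX (fun t x => β t x / α t x) t x * u t x
            + pT (fun t x => β t x / α t x) t x * va t x := by
  have hα1 : ContDiff ℝ 1 (fun p : ℝ × ℝ => α p.1 p.2) := hα.of_le (by simp)
  have hβ1 : ContDiff ℝ 1 (fun p : ℝ × ℝ => β p.1 p.2) := hβ.of_le (by simp)
  intro t x
  have dαx := diffX hα1 t x
  have dβx := diffX hβ1 t x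
  have dvax := diffX hva t x
  have dvbx := diffX hvb t x
  have dαt := diffT hα1 t x
  have dβt := diffT hβ1 t x
  have dvat := diffT hva t x
  have dvbt := diffT hvb t x
  have drx : DifferentiableAt ℝ (fun y => β t y / α t y) x := dβx.div dαx (hα0 t x)
  have drt : DifferentiableAt ℝ (fun s => β s x / α s x) t := dβt.div dαt (hα0 t x)
  constructor
  · have h1 : pX (fun t x => (β t x / α t x) * va t x - vb t x) t x
        = (deriv (fun y => β t y / α t y) x * va t x
            + (β t x / α t x) * deriv (fun y => va t y) x)
          - deriv (fun y => vb t y) x := by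
      unfold pX
      beta_reduce
      rw [deriv_fun_sub (drx.fun_mul dvax) dvbx, deriv_fun_mul drx dvax]
    rw [h1]
    have e1 : deriv (fun y => va t y) x = α t x * u t x := hvax t x
    have e2 : deriv (fun y => vb t y) x = β t x * u t x := hvbx t x
    rw [e1, e2]
    unfold pX
    field_simp [hα0 t x]
    ring
  · have h1 : pT (fun t x => (β t x / α t x) * va t x - vb t x) t x
        = (deriv (fun s => β s x / α s x) t * va t x
            + (β t x / α t x) * deriv (fun s => va s x) t)
          - deriv (fun s => vb s x) t := by
      unfold pT
      beta_reduce
      rw [deriv_fun_sub (drt.fun_mul dvat) dvbt, deriv_fun_mul drt dvat]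
    rw [h1]
    have e1 : deriv (fun s => va s x) t
        = α t x * pX u t x - pX α t x * u t x := hvat t x
    have e2 : deriv (fun s => vb s x) t
        = β t x * pX u t x - pX β t x * u t x := hvbt t x
    rw [e1, e2]
    have hdiv : deriv (fun y => β t y / α t y) x
        = (deriv (fun y => β t y) x * α t x - β t x * deriv (fun y => α t y) x)
          / (α t x) ^ 2 := deriv_div dβx dαx (hα0 t x)
    unfold pX pT
    rw [hdiv]
    field_simp [hα0 t x]
    ring
end

section
/- Let ũ, ṽ : ℝ² → ℝ be continuously differentiable functions satisfying the potential system of the Burgers equation: ∂_x ṽ = ũ and ∂_t ṽ = ∂_x ũ + ũ² at every point of ℝ². Define u := ũ·e^{ṽ} and v := e^{ṽ}. Then ∂_x v = u and ∂_t v = ∂_x u at every point of ℝ², i.e. (u, v) satisfies the potential system of the linear heat equation. (The Cole–Hopf-type transformation t = t̃, x = x̃, u = ũe^{ṽ}, v = e^{ṽ} maps the potential system of the Burgers equation to that of the linear heat equation.) -/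
section Slices

variable {𝕜 E F G : Type*} [NontriviallyNormedField 𝕜] [NormedAddCommGroup E] [NormedSpace 𝕜 E]
  [NormedAddCommGroup F] [NormedSpace 𝕜 F] [NormedAddCommGroup G] [NormedSpace 𝕜 G]
  {f : E → F → G}

theorem Differentiable.differentiableAt_left_slice
    (hf : Differentiable 𝕜 (fun p : E × F => f p.1 p.2)) (t : E) (x : F) :
    DifferentiableAt 𝕜 (fun s => f s x) t :=
  (hf (t, x)).comp (f := fun s => (s, x)) t (differentiableAt_id.prodMk (differentiableAt_const x))

theorem Differentiable.differentiableAt_right_slice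
    (hf : Differentiable 𝕜 (fun p : E × F => f p.1 p.2)) (t : E) (x : F) :
    DifferentiableAt 𝕜 (fun y => f t y) x :=
  (hf (t, x)).comp x ((differentiableAt_const t).prodMk differentiableAt_id)

end Slices

section PartialDerivatives

variable {f g : ℝ → ℝ → ℝ} {t x : ℝ}

theorem pT_exp (hf : DifferentiableAt ℝ (fun s => f s x) t) :
    pT (fun t x => Real.exp (f t x)) t x = Real.exp (f t x) * pT f t x :=
  deriv_exp hf

theorem pX_exp (hf : DifferentiableAt ℝ (fun y => f t y) x) :
    pX (fun t x => Real.exp (f t x)) t x = Real.exp (f t x) * pX f t x :=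
  deriv_exp hf

theorem pX_mul (hf : DifferentiableAt ℝ (fun y => f t y) x)
    (hg : DifferentiableAt ℝ (fun y => g t y) x) :
    pX (fun t x => f t x * g t x) t x = pX f t x * g t x + f t x * pX g t x :=
  deriv_mul hf hg

end PartialDerivatives

/-- The Cole–Hopf-type transformation `u = ũ e^ṽ`, `v = e^ṽ` maps the potential system
`ṽ_x = ũ`, `ṽ_t = ũ_x + ũ²` of the Burgers equation to the potential system
`v_x = u`, `v_t = u_x` of the linear heat equation. -/
theorem cole_hopf_potential_systems
    (ut vt : ℝ → ℝ → ℝ)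
    (hut : ContDiff ℝ 1 (fun p : ℝ × ℝ => ut p.1 p.2))
    (hvt : ContDiff ℝ 1 (fun p : ℝ × ℝ => vt p.1 p.2))
    (hvx : ∀ t x : ℝ, pX vt t x = ut t x)
    (hvtt : ∀ t x : ℝ, pT vt t x = pX ut t x + (ut t x) ^ 2)
    (u v : ℝ → ℝ → ℝ)
    (hu : u = fun t x => ut t x * Real.exp (vt t x))
    (hv : v = fun t x => Real.exp (vt t x)) :
    ∀ t x : ℝ, pX v t x = u t x ∧ pT v t x = pX u t x := by
  intro t x
  subst hu hv
  have hutd := hut.differentiable one_ne_zero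
  have hvtd := hvt.differentiable one_ne_zero
  have hvt_x := hvtd.differentiableAt_right_slice t x
  have hexp_x : DifferentiableAt ℝ (fun y => Real.exp (vt t y)) x := hvt_x.exp
  refine ⟨?_, ?_⟩
  · rw [pX_exp hvt_x, hvx]
    ring
  · rw [pT_exp (hvtd.differentiableAt_left_slice t x), hvtt,
      pX_mul (g := fun t x => Real.exp (vt t x)) (hutd.differentiableAt_right_slice t x) hexp_x,
      pX_exp hvt_x, hvx]
    ring
end

section
/- Let p ≥ 1 and let α¹,…,α^p and β¹,…,β^p be smooth functions ℝ² → ℝ, each satisfying the backward linear heat equation: ∂_t α^s + ∂_x² α^s = 0 and ∂_t β^s + ∂_x² β^s = 0 on ℝ² for every s. Suppose that Σ_{s=1}^{p} (∂_x α^s · β^s − α^s · ∂_x β^s) = 0 identically on ℝ². Then for all nonnegative integers i, j: Σ_{s=1}^{p} (∂_x^i α^s · ∂_x^j β^s − ∂_x^j α^s · ∂_x^i β^s) = 0 identically on ℝ², where ∂_x^i denotes the i-th partial derivative with respect to the second (space) variable. -/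
/-- Directional partial derivative on `ℝ × ℝ`. -/
noncomputable def PD (v : ℝ × ℝ) (F : ℝ × ℝ → ℝ) : ℝ × ℝ → ℝ :=
  fun q => fderiv ℝ F q v

lemma PD_smooth (v : ℝ × ℝ) {F : ℝ × ℝ → ℝ} (hF : ContDiff ℝ (⊤ : ℕ∞) F) :
    ContDiff ℝ (⊤ : ℕ∞) (PD v F) :=
  (hF.fderiv_right (by simp)).clm_apply contDiff_const

lemma PD_comm {F : ℝ × ℝ → ℝ} (hF : ContDiff ℝ (⊤ : ℕ∞) F) (v w : ℝ × ℝ) (q : ℝ × ℝ) :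
    PD v (PD w F) q = PD w (PD v F) q := by
  have hdF : ContDiff ℝ (⊤ : ℕ∞) (fderiv ℝ F) := hF.fderiv_right (by simp)
  have h2 : ∀ u : ℝ × ℝ, fderiv ℝ (fun r => fderiv ℝ F r u) q
      = (fderiv ℝ (fderiv ℝ F) q).flip u := by
    intro u
    have := fderiv_clm_apply (x := q) (c := fderiv ℝ F) (u := fun _ => u)
      ((hdF.differentiable (by simp)) q) (differentiableAt_const u)
    simpa [fderiv_fun_const] using this
  have hsym := second_derivative_symmetric
    (f := F) (f' := fderiv ℝ F) (f'' := fderiv ℝ (fderiv ℝ F) q) (x := q)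
    (fun y => (hF.differentiable (by simp) y).hasFDerivAt)
    ((hdF.differentiable (by simp) q).hasFDerivAt) v w
  have goal : fderiv ℝ (fun r => fderiv ℝ F r w) q v
      = fderiv ℝ (fun r => fderiv ℝ F r v) q w := by
    rw [h2 w, h2 v]
    simpa using hsym
  exact goal

lemma PD_neg {G : ℝ × ℝ → ℝ} (v : ℝ × ℝ) :
    PD v (fun q => -G q) = fun q => -(PD v G q) := by
  funext q; simp [PD, fderiv_neg]

lemma PD_iter_smooth (v : ℝ × ℝ) {F : ℝ × ℝ → ℝ} (hF : ContDiff ℝ (⊤ : ℕ∞) F) (i : ℕ) :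
    ContDiff ℝ (⊤ : ℕ∞) ((PD v)^[i] F) := by
  induction i generalizing F with
  | zero => exact hF
  | succ i ih =>
    rw [Function.iterate_succ_apply]
    exact ih (PD_smooth v hF)

lemma PD_iter_neg (v : ℝ × ℝ) (G : ℝ × ℝ → ℝ) (i : ℕ) :
    (PD v)^[i] (fun q => -G q) = fun q => -((PD v)^[i] G q) := by
  induction i generalizing G with
  | zero => rfl
  | succ i ih =>
    rw [Function.iterate_succ_apply, Function.iterate_succ_apply, PD_neg, ih]

/-- `pX` corresponds to `PD (0,1)` on the uncurried function. -/
lemma pX_eq (f : ℝ → ℝ → ℝ) (hF : ContDiff ℝ (⊤ : ℕ∞) (fun q : ℝ × ℝ => f q.1 q.2))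
    (t x : ℝ) : pX f t x = PD (0, 1) (fun q : ℝ × ℝ => f q.1 q.2) (t, x) := by
  set F : ℝ × ℝ → ℝ := fun q => f q.1 q.2 with hFdef
  have hline : HasFDerivAt (fun y : ℝ => ((t, y) : ℝ × ℝ))
      (((0 : ℝ →L[ℝ] ℝ)).prod (ContinuousLinearMap.id ℝ ℝ)) x :=
    (hasFDerivAt_const t x).prodMk (hasFDerivAt_id x)
  have hd : HasFDerivAt F (fderiv ℝ F (t, x)) (t, x) :=
    (hF.differentiable (by simp) (t, x)).hasFDerivAt
  have hcomp := (hd.comp x hline).hasDerivAt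
  have : deriv (fun y => f t y) x
      = fderiv ℝ F (t, x) ((0 : ℝ) , (1 : ℝ)) := by
    have : (F ∘ fun y : ℝ => ((t, y) : ℝ × ℝ)) = fun y => f t y := rfl
    rw [← this]
    have := hcomp.deriv
    simpa using this
  simpa [pX, PD] using this

lemma pT_eq (f : ℝ → ℝ → ℝ) (hF : ContDiff ℝ (⊤ : ℕ∞) (fun q : ℝ × ℝ => f q.1 q.2))
    (t x : ℝ) : pT f t x = PD (1, 0) (fun q : ℝ × ℝ => f q.1 q.2) (t, x) := by
  set F : ℝ × ℝ → ℝ := fun q => f q.1 q.2 with hFdef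
  have hline : HasFDerivAt (fun s : ℝ => ((s, x) : ℝ × ℝ))
      ((ContinuousLinearMap.id ℝ ℝ).prod (0 : ℝ →L[ℝ] ℝ)) t :=
    (hasFDerivAt_id t).prodMk (hasFDerivAt_const x t)
  have hd : HasFDerivAt F (fderiv ℝ F (t, x)) (t, x) :=
    (hF.differentiable (by simp) (t, x)).hasFDerivAt
  have hcomp := (hd.comp t hline).hasDerivAt
  have : deriv (fun s => f s x) t
      = fderiv ℝ F (t, x) ((1 : ℝ) , (0 : ℝ)) := by
    have : (F ∘ fun s : ℝ => ((s, x) : ℝ × ℝ)) = fun s => f s x := rfl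
    rw [← this]
    have := hcomp.deriv
    simpa using this
  simpa [pT, PD] using this

lemma pX_iter_eq (f : ℝ → ℝ → ℝ) (hF : ContDiff ℝ (⊤ : ℕ∞) (fun q : ℝ × ℝ => f q.1 q.2))
    (i : ℕ) (t x : ℝ) :
    pX^[i] f t x = (PD (0, 1))^[i] (fun q : ℝ × ℝ => f q.1 q.2) (t, x) := by
  induction i generalizing f with
  | zero => rfl
  | succ i ih =>
    rw [Function.iterate_succ_apply, Function.iterate_succ_apply]
    have huncurry : (fun q : ℝ × ℝ => pX f q.1 q.2)
        = PD (0, 1) (fun q : ℝ × ℝ => f q.1 q.2) := by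
      funext q; exact pX_eq f hF q.1 q.2
    have hsm : ContDiff ℝ (⊤ : ℕ∞) (fun q : ℝ × ℝ => pX f q.1 q.2) := by
      rw [huncurry]; exact PD_smooth _ hF
    rw [ih (pX f) hsm, huncurry]

/-- If `α^s`, `β^s` solve the backward linear heat equation and
`Σ_s (α^s_x β^s − α^s β^s_x) = 0` identically, then
`Σ_s (α^s_i β^s_j − α^s_j β^s_i) = 0` identically for all `i, j`. -/
theorem backward_heat_wronskian_relations
    (p : ℕ) (hp : 1 ≤ p) (α β : Fin p → ℝ → ℝ → ℝ)
    (hα : ∀ s, ContDiff ℝ (⊤ : ℕ∞) (fun q : ℝ × ℝ => α s q.1 q.2))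
    (hβ : ∀ s, ContDiff ℝ (⊤ : ℕ∞) (fun q : ℝ × ℝ => β s q.1 q.2))
    (hbackα : ∀ s, ∀ t x : ℝ, pT (α s) t x + pX (pX (α s)) t x = 0)
    (hbackβ : ∀ s, ∀ t x : ℝ, pT (β s) t x + pX (pX (β s)) t x = 0)
    (h1 : ∀ t x : ℝ, ∑ s, (pX (α s) t x * β s t x - α s t x * pX (β s) t x) = 0) :
    ∀ i j : ℕ, ∀ t x : ℝ,
      ∑ s, ((pX^[i] (α s)) t x * (pX^[j] (β s)) t x
        - (pX^[j] (α s)) t x * (pX^[i] (β s)) t x) = 0 := by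
  classical
  set A : Fin p → ℝ × ℝ → ℝ := fun s q => α s q.1 q.2 with hAdef
  set B : Fin p → ℝ × ℝ → ℝ := fun s q => β s q.1 q.2 with hBdef
  set Dx : (ℝ × ℝ → ℝ) → (ℝ × ℝ → ℝ) := PD (0, 1) with hDxdef
  set Dt : (ℝ × ℝ → ℝ) → (ℝ × ℝ → ℝ) := PD (1, 0) with hDtdef
  have hA : ∀ s, ContDiff ℝ (⊤ : ℕ∞) (A s) := hα
  have hB : ∀ s, ContDiff ℝ (⊤ : ℕ∞) (B s) := hβ
  have hAi : ∀ i s, ContDiff ℝ (⊤ : ℕ∞) (Dx^[i] (A s)) := fun i s => PD_iter_smooth _ (hA s) i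
  have hBi : ∀ i s, ContDiff ℝ (⊤ : ℕ∞) (Dx^[i] (B s)) := fun i s => PD_iter_smooth _ (hB s) i
  -- heat equation in uncurried form
  have heatA : ∀ s, Dt (A s) = fun q => -(Dx (Dx (A s)) q) := by
    intro s; funext q
    have h := hbackα s q.1 q.2
    rw [pT_eq (α s) (hα s) q.1 q.2] at h
    have h2 : pX (pX (α s)) q.1 q.2 = Dx (Dx (A s)) q := by
      have := pX_iter_eq (α s) (hα s) 2 q.1 q.2
      simpa [Function.iterate_succ_apply, pX_iter_eq] using
        pX_iter_eq (α s) (hα s) 2 q.1 q.2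
    rw [h2] at h
    have : Dt (A s) q + Dx (Dx (A s)) q = 0 := h
    linarith
  have heatB : ∀ s, Dt (B s) = fun q => -(Dx (Dx (B s)) q) := by
    intro s; funext q
    have h := hbackβ s q.1 q.2
    rw [pT_eq (β s) (hβ s) q.1 q.2] at h
    have h2 : pX (pX (β s)) q.1 q.2 = Dx (Dx (B s)) q := by
      simpa [Function.iterate_succ_apply, pX_iter_eq] using
        pX_iter_eq (β s) (hβ s) 2 q.1 q.2
    rw [h2] at h
    have : Dt (B s) q + Dx (Dx (B s)) q = 0 := h
    linarith
  -- t-derivative commutes with iterated x-derivatives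
  have comm : ∀ (G : ℝ × ℝ → ℝ), ContDiff ℝ (⊤ : ℕ∞) G → ∀ i,
      Dt (Dx^[i] G) = Dx^[i] (Dt G) := by
    intro G hG i
    induction i generalizing G with
    | zero => rfl
    | succ i ih =>
      rw [Function.iterate_succ_apply, Function.iterate_succ_apply,
        ih (Dx G) (PD_smooth _ hG)]
      congr 1
      funext q
      exact PD_comm hG _ _ q
  -- hence Dt (Dx^[i] A) = - Dx^[i+2] A
  have DtIter : ∀ (G : ℝ × ℝ → ℝ), ContDiff ℝ (⊤ : ℕ∞) G →
      (Dt G = fun q => -(Dx (Dx G) q)) → ∀ i,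
      Dt (Dx^[i] G) = fun q => -(Dx^[i+2] G q) := by
    intro G hG hheat i
    rw [comm G hG i, hheat, hDxdef, PD_iter_neg]
    funext q
    congr 1
  -- the Wronskian-type sums
  set W : ℕ → ℕ → ℝ × ℝ → ℝ := fun i j q =>
    ∑ s, (Dx^[i] (A s) q * Dx^[j] (B s) q - Dx^[j] (A s) q * Dx^[i] (B s) q)
    with hWdef
  have hWsmooth : ∀ i j, ContDiff ℝ (⊤ : ℕ∞) (W i j) := by
    intro i j
    apply ContDiff.sum
    intro s _
    exact ((hAi i s).mul (hBi j s)).sub ((hAi j s).mul (hBi i s))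
  have hWdiag : ∀ i q, W i i q = 0 := by
    intro i q
    apply Finset.sum_eq_zero
    intro s _
    ring
  have hWanti : ∀ i j q, W i j q = -(W j i q) := by
    intro i j q
    rw [hWdef]
    simp only
    rw [← Finset.sum_neg_distrib]
    apply Finset.sum_congr rfl
    intro s _
    ring
  -- derivative computation for products
  have PD_mul : ∀ (v : ℝ × ℝ) (F G : ℝ × ℝ → ℝ), ContDiff ℝ (⊤ : ℕ∞) F → ContDiff ℝ (⊤ : ℕ∞) G →
      ∀ q, PD v (fun r => F r * G r) q = PD v F q * G q + F q * PD v G q := by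
    intro v F G hF hG q
    have := fderiv_fun_mul (x := q) (hF.differentiable (by simp) q) (hG.differentiable (by simp) q)
    simp only [PD, this]
    simp [mul_comm]
    ring
  have PD_W : ∀ (v : ℝ × ℝ) (i j : ℕ) (q : ℝ × ℝ),
      PD v (W i j) q = ∑ s, ((PD v (Dx^[i] (A s)) q * Dx^[j] (B s) q
          + Dx^[i] (A s) q * PD v (Dx^[j] (B s)) q)
        - (PD v (Dx^[j] (A s)) q * Dx^[i] (B s) q
          + Dx^[j] (A s) q * PD v (Dx^[i] (B s)) q)) := by
    intro v i j q
    have hterm : ∀ s : Fin p, DifferentiableAt ℝ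
        (fun r => Dx^[i] (A s) r * Dx^[j] (B s) r - Dx^[j] (A s) r * Dx^[i] (B s) r) q := by
      intro s
      exact (((hAi i s).differentiable (by simp) q).mul ((hBi j s).differentiable (by simp) q)).sub
        (((hAi j s).differentiable (by simp) q).mul ((hBi i s).differentiable (by simp) q))
    have hsum : PD v (W i j) q = ∑ s, PD v (fun r =>
        Dx^[i] (A s) r * Dx^[j] (B s) r - Dx^[j] (A s) r * Dx^[i] (B s) r) q := by
      simp only [PD, hWdef]
      rw [fderiv_fun_sum (fun s _ => hterm s)]
      simp
    rw [hsum]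
    apply Finset.sum_congr rfl
    intro s _
    have hsub : PD v (fun r =>
        Dx^[i] (A s) r * Dx^[j] (B s) r - Dx^[j] (A s) r * Dx^[i] (B s) r) q
        = PD v (fun r => Dx^[i] (A s) r * Dx^[j] (B s) r) q
          - PD v (fun r => Dx^[j] (A s) r * Dx^[i] (B s) r) q := by
      simp only [PD]
      rw [fderiv_fun_sub (f := fun r => Dx^[i] (A s) r * Dx^[j] (B s) r)
        (g := fun r => Dx^[j] (A s) r * Dx^[i] (B s) r) (((hAi i s).differentiable (by simp) q).mul ((hBi j s).differentiable (by simp) q))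
        (((hAi j s).differentiable (by simp) q).mul ((hBi i s).differentiable (by simp) q))]
      simp
    rw [hsub, PD_mul v _ _ (hAi i s) (hBi j s) q, PD_mul v _ _ (hAi j s) (hBi i s) q]
  -- x-derivative recurrence
  have DxW : ∀ i j q, Dx (W i j) q = W (i+1) j q + W i (j+1) q := by
    intro i j q
    rw [hDxdef, PD_W (0,1) i j q, hWdef]
    simp only
    rw [← Finset.sum_add_distrib]
    apply Finset.sum_congr rfl
    intro s _
    have e1 : PD (0,1) (Dx^[i] (A s)) = Dx^[i+1] (A s) := by
      rw [hDxdef, ← Function.iterate_succ_apply' (PD (0,1)) i (A s)]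
    have e2 : PD (0,1) (Dx^[j] (B s)) = Dx^[j+1] (B s) := by
      rw [hDxdef, ← Function.iterate_succ_apply' (PD (0,1)) j (B s)]
    have e3 : PD (0,1) (Dx^[j] (A s)) = Dx^[j+1] (A s) := by
      rw [hDxdef, ← Function.iterate_succ_apply' (PD (0,1)) j (A s)]
    have e4 : PD (0,1) (Dx^[i] (B s)) = Dx^[i+1] (B s) := by
      rw [hDxdef, ← Function.iterate_succ_apply' (PD (0,1)) i (B s)]
    rw [e1, e2, e3, e4]
    ring
  -- t-derivative recurrence
  have DtW : ∀ i j q, Dt (W i j) q = -(W (i+2) j q) - W i (j+2) q := by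
    intro i j q
    rw [hDtdef, PD_W (1,0) i j q, hWdef]
    simp only
    have key : ∀ s : Fin p,
        (PD (1,0) (Dx^[i] (A s)) q * Dx^[j] (B s) q
          + Dx^[i] (A s) q * PD (1,0) (Dx^[j] (B s)) q)
        - (PD (1,0) (Dx^[j] (A s)) q * Dx^[i] (B s) q
          + Dx^[j] (A s) q * PD (1,0) (Dx^[i] (B s)) q)
        = -(Dx^[i+2] (A s) q * Dx^[j] (B s) q - Dx^[j] (A s) q * Dx^[i+2] (B s) q)
          - (Dx^[i] (A s) q * Dx^[j+2] (B s) q - Dx^[j+2] (A s) q * Dx^[i] (B s) q) := by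
      intro s
      have eA : ∀ k, PD (1,0) (Dx^[k] (A s)) q = -(Dx^[k+2] (A s) q) := by
        intro k
        have := DtIter (A s) (hA s) (heatA s) k
        rw [hDtdef] at this
        exact congrFun this q
      have eB : ∀ k, PD (1,0) (Dx^[k] (B s)) q = -(Dx^[k+2] (B s) q) := by
        intro k
        have := DtIter (B s) (hB s) (heatB s) k
        rw [hDtdef] at this
        exact congrFun this q
      rw [eA i, eA j, eB i, eB j]
      ring
    calc (∑ s, ((PD (1,0) (Dx^[i] (A s)) q * Dx^[j] (B s) q
          + Dx^[i] (A s) q * PD (1,0) (Dx^[j] (B s)) q)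
        - (PD (1,0) (Dx^[j] (A s)) q * Dx^[i] (B s) q
          + Dx^[j] (A s) q * PD (1,0) (Dx^[i] (B s)) q)))
        = ∑ s, (-(Dx^[i+2] (A s) q * Dx^[j] (B s) q - Dx^[j] (A s) q * Dx^[i+2] (B s) q)
          - (Dx^[i] (A s) q * Dx^[j+2] (B s) q - Dx^[j+2] (A s) q * Dx^[i] (B s) q)) :=
        Finset.sum_congr rfl (fun s _ => key s)
      _ = -(∑ s, (Dx^[i+2] (A s) q * Dx^[j] (B s) q - Dx^[j] (A s) q * Dx^[i+2] (B s) q))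
          - ∑ s, (Dx^[i] (A s) q * Dx^[j+2] (B s) q - Dx^[j+2] (A s) q * Dx^[i] (B s) q) := by
        rw [Finset.sum_sub_distrib, Finset.sum_neg_distrib]
  -- derivative of the zero function
  have PD_zero : ∀ (v : ℝ × ℝ) (G : ℝ × ℝ → ℝ), (∀ q, G q = 0) → ∀ q, PD v G q = 0 := by
    intro v G hG q
    have : G = fun _ => (0 : ℝ) := funext hG
    rw [this]
    simp [PD]
  -- base case W 1 0 = 0
  have hW10 : ∀ q, W 1 0 q = 0 := by
    intro q
    rw [hWdef]
    simp only
    have := h1 q.1 q.2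
    rw [← this]
    apply Finset.sum_congr rfl
    intro s _
    have e1 : Dx^[1] (A s) q = pX (α s) q.1 q.2 := by
      rw [← pX_iter_eq (α s) (hα s) 1 q.1 q.2]
      rfl
    have e2 : Dx^[1] (B s) q = pX (β s) q.1 q.2 := by
      rw [← pX_iter_eq (β s) (hβ s) 1 q.1 q.2]
      rfl
    simp only [Function.iterate_zero_apply, e1, e2]
    rfl
  -- main strong induction
  have main : ∀ n i j, i + j = n → ∀ q, W i j q = 0 := by
    intro n
    induction n using Nat.strong_induction_on with
    | _ n IH =>
      have key : ∀ i j, j < i → i + j = n → ∀ q, W i j q = 0 := by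
        intro i j hji hij q
        rcases Nat.lt_or_ge i 2 with hi | hi
        · -- i = 1, j = 0
          interval_cases i
          · omega
          · have hj : j = 0 := by omega
            subst hj
            exact hW10 q
        · -- i ≥ 2
          obtain ⟨a, rfl⟩ : ∃ a, i = a + 2 := ⟨i - 2, by omega⟩
          have hn2 : a + j + 2 = n := by omega
          -- level n-2 vanishes
          have hIH2 : ∀ q', W a j q' = 0 := IH (a + j) (by omega) a j rfl
          -- level n-1 vanishes
          have hIH1 : ∀ c d, c + d + 1 = n → ∀ q', W c d q' = 0 := by
            intro c d hcd q'
            exact IH (c + d) (by omega) c d rfl q'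
          -- from time derivative of W a j = 0:
          have ht : (0 : ℝ) = -(W (a+2) j q) - W a (j+2) q := by
            rw [← DtW a j q, hDtdef]
            exact (PD_zero (1,0) (W a j) hIH2 q).symm
          -- from x derivative of W (a+1) j = 0:
          have hx1 : (0 : ℝ) = W (a+2) j q + W (a+1) (j+1) q := by
            rw [← DxW (a+1) j q, hDxdef]
            exact (PD_zero (0,1) (W (a+1) j) (hIH1 (a+1) j (by omega)) q).symm
          -- from x derivative of W a (j+1) = 0:
          have hx2 : (0 : ℝ) = W (a+1) (j+1) q + W a (j+2) q := by
            rw [← DxW a (j+1) q, hDxdef]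
            exact (PD_zero (0,1) (W a (j+1)) (hIH1 a (j+1) (by omega)) q).symm
          linarith
      intro i j hij q
      rcases Nat.lt_trichotomy i j with h | h | h
      · rw [hWanti i j q, key j i h (by omega) q]
        simp
      · subst h
        exact hWdiag i q
      · exact key i j h hij q
  -- conclude
  intro i j t x
  have := main (i + j) i j rfl (t, x)
  rw [hWdef] at this
  simp only at this
  rw [← this]
  apply Finset.sum_congr rfl
  intro s _
  rw [pX_iter_eq (α s) (hα s) i t x, pX_iter_eq (β s) (hβ s) j t x,
    pX_iter_eq (α s) (hα s) j t x, pX_iter_eq (β s) (hβ s) i t x]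
end

section
/- Let p ≥ 1 and let α¹,…,α^p and β¹,…,β^p be smooth functions ℝ² → ℝ such that for all integers i, j with 0 ≤ i < j ≤ p and all (t,x) ∈ ℝ²: Σ_{s=1}^{p} (∂_x^i α^s(t,x)·∂_x^j β^s(t,x) − ∂_x^j α^s(t,x)·∂_x^i β^s(t,x)) = 0. Then for every s′ ∈ {1,…,p} and every (t,x) ∈ ℝ², the Wronskian W(α¹,…,α^p,β^{s′})(t,x) vanishes; that is, the determinant of the (p+1)×(p+1) matrix whose entry in row i (i = 0,…,p) and column k is ∂_x^i α^k(t,x) for k = 1,…,p and ∂_x^i β^{s′}(t,x) for k = p+1, equals zero. -/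
/-- Laplace expansion of a "bordered" determinant along its last column. -/
private lemma det_border_expand (p : ℕ) (A : Fin (p+1) → Fin p → ℝ) (b : Fin (p+1) → ℝ) :
    Matrix.det (Matrix.of fun i k : Fin (p+1) =>
      if hk : (k : ℕ) < p then A i ⟨k, hk⟩ else b i)
    = ∑ i : Fin (p+1), ((-1 : ℝ)^((i:ℕ)+p) *
        Matrix.det (Matrix.of fun (i' : Fin p) s => A (i.succAbove i') s)) * b i := by
  rw [Matrix.det_succ_column _ (Fin.last p)]
  refine Finset.sum_congr rfl fun i _ => ?_
  have h1 : (Matrix.of fun i k : Fin (p+1) =>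
      if hk : (k : ℕ) < p then A i ⟨k, hk⟩ else b i) i (Fin.last p) = b i := by
    simp
  have h2 : ((Matrix.of fun i k : Fin (p+1) =>
      if hk : (k : ℕ) < p then A i ⟨k, hk⟩ else b i).submatrix i.succAbove
        (Fin.last p).succAbove) = Matrix.of fun (i' : Fin p) s => A (i.succAbove i') s := by
    ext i' s
    simp [Fin.succAbove_last, s.is_lt]
  rw [h1, h2, Fin.val_last]
  ring

/-- The key linear-algebra fact: if the (p+1)×(p+1) "Gram-like" matrix
`(i,j) ↦ ∑ s, A i s * B j s` is symmetric, then each bordered determinant vanishes. -/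
private lemma key_det_zero (p : ℕ) (A B : Fin (p+1) → Fin p → ℝ)
    (hsym : ∀ i j : Fin (p+1), ∑ s, A i s * B j s = ∑ s, A j s * B i s)
    (s' : Fin p) :
    Matrix.det (Matrix.of fun i k : Fin (p+1) =>
      if hk : (k : ℕ) < p then A i ⟨k, hk⟩ else B i s') = 0 := by
  set c : Fin (p+1) → ℝ := fun i => (-1 : ℝ)^((i:ℕ)+p) *
    Matrix.det (Matrix.of fun (i' : Fin p) s => A (i.succAbove i') s) with hc
  have hexp : ∀ b : Fin (p+1) → ℝ,
      Matrix.det (Matrix.of fun i k : Fin (p+1) =>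
        if hk : (k : ℕ) < p then A i ⟨k, hk⟩ else b i) = ∑ i, c i * b i :=
    det_border_expand p A
  -- the cofactor vector `c` is orthogonal to every column of `A`
  have hcA : ∀ s : Fin p, ∑ i, c i * A i s = 0 := by
    intro s
    rw [← hexp (fun i => A i s), ← Matrix.det_transpose]
    apply Matrix.det_zero_of_row_eq (i := s.castSucc) (j := Fin.last p)
    · intro hh
      have := congrArg Fin.val hh
      simp at this
      omega
    · funext i
      simp [Matrix.transpose_apply, s.is_lt]
  set d : Fin p → ℝ := fun s => ∑ i, c i * B i s with hd
  -- `d` lies in the kernel of `A`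
  have hAd : ∀ i0 : Fin (p+1), ∑ s, A i0 s * d s = 0 := by
    intro i0
    calc ∑ s, A i0 s * d s = ∑ s, ∑ i, A i0 s * (c i * B i s) := by
          simp only [hd, Finset.mul_sum]
      _ = ∑ i, ∑ s, A i0 s * (c i * B i s) := Finset.sum_comm
      _ = ∑ i, c i * ∑ s, A i0 s * B i s := by
          refine Finset.sum_congr rfl fun i _ => ?_
          rw [Finset.mul_sum]; exact Finset.sum_congr rfl fun s _ => by ring
      _ = ∑ i, c i * ∑ s, A i s * B i0 s := by
          exact Finset.sum_congr rfl fun i _ => by rw [hsym i0 i]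
      _ = ∑ i, ∑ s, (c i * A i s) * B i0 s := by
          refine Finset.sum_congr rfl fun i _ => ?_
          rw [Finset.mul_sum]; exact Finset.sum_congr rfl fun s _ => by ring
      _ = ∑ s, (∑ i, c i * A i s) * B i0 s := by
          rw [Finset.sum_comm]
          exact Finset.sum_congr rfl fun s _ => (Finset.sum_mul _ _ _).symm
      _ = 0 := by simp [hcA]
  by_cases hker : ∃ v : Fin p → ℝ, v ≠ 0 ∧ ∀ i, ∑ s, A i s * v s = 0
  · -- columns of `A` are linearly dependent: the determinant vanishes directly
    obtain ⟨v, hv0, hv⟩ := hker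
    rw [← Matrix.exists_mulVec_eq_zero_iff]
    refine ⟨fun k => if hk : (k:ℕ) < p then v ⟨k,hk⟩ else 0, ?_, ?_⟩
    · intro h0
      apply hv0
      funext s
      have := congrFun h0 s.castSucc
      simpa [s.is_lt] using this
    · funext i
      simp only [Matrix.mulVec, dotProduct, Pi.zero_apply]
      rw [Fin.sum_univ_castSucc]
      simp only [Matrix.of_apply]
      have hlast : ¬((Fin.last p : ℕ) < p) := by simp
      rw [dif_neg hlast]
      simpa [Fin.is_lt, mul_comm] using hv i
  · -- columns of `A` independent: then `d = 0`, in particular the expansion at `s'` is `0`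
    have hd0 : d = 0 := by
      by_contra hne
      exact hker ⟨d, hne, hAd⟩
    rw [hexp (fun i => B i s')]
    have : d s' = 0 := by rw [hd0]; rfl
    simpa [hd] using this

/-- If `Σ_s (α^s_i β^s_j − α^s_j β^s_i) = 0` for all `0 ≤ i < j ≤ p`, then the Wronskian
`W(α¹,…,α^p, β^{s'})` vanishes identically for every `s'`. -/
theorem wronskian_vanishes_of_pairwise_relations
    (p : ℕ) (hp : 1 ≤ p) (α β : Fin p → ℝ → ℝ → ℝ)
    (hα : ∀ s, ContDiff ℝ (⊤ : ℕ∞) (fun q : ℝ × ℝ => α s q.1 q.2))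
    (hβ : ∀ s, ContDiff ℝ (⊤ : ℕ∞) (fun q : ℝ × ℝ => β s q.1 q.2))
    (h : ∀ i j : ℕ, i < j → j ≤ p → ∀ t x : ℝ,
      ∑ s, ((pX^[i] (α s)) t x * (pX^[j] (β s)) t x
        - (pX^[j] (α s)) t x * (pX^[i] (β s)) t x) = 0) :
    ∀ s' : Fin p, ∀ t x : ℝ,
      Matrix.det (Matrix.of fun i k : Fin (p + 1) =>
        if hk : (k : ℕ) < p then (pX^[(i : ℕ)] (α ⟨k, hk⟩)) t x
        else (pX^[(i : ℕ)] (β s')) t x) = 0 := by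
  intro s' t x
  set A : Fin (p+1) → Fin p → ℝ := fun i s => (pX^[(i:ℕ)] (α s)) t x with hA
  set B : Fin (p+1) → Fin p → ℝ := fun i s => (pX^[(i:ℕ)] (β s)) t x with hB
  have hsym : ∀ i j : Fin (p+1), ∑ s, A i s * B j s = ∑ s, A j s * B i s := by
    intro i j
    rcases lt_trichotomy (i:ℕ) (j:ℕ) with h1 | h1 | h1
    · have h' := h i j h1 (Nat.lt_succ_iff.mp j.is_lt) t x
      rw [Finset.sum_sub_distrib] at h'
      simp only [hA, hB]
      linarith
    · have : i = j := Fin.ext h1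
      rw [this]
    · have h' := h j i h1 (Nat.lt_succ_iff.mp i.is_lt) t x
      rw [Finset.sum_sub_distrib] at h'
      simp only [hA, hB]
      linarith
  exact key_det_zero p A B hsym s'
end
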